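/- For every integer j ≥ 4, the cycle C_j on j vertices satisfies m(C_j) < ℓ(j); in particular, for j ≥ 6 one has m(C_j) ≤ 2·ℓ(j − 3) + ℓ(j − 4) < ℓ(j). -/

import Mathlib

/-- `ProdOfSum n m` holds if `m` can be written as the product of a nonempty list of
positive integers whose sum is `n`. -/
def ProdOfSum (n m : ℕ) : Prop :=
  ∃ l : List ℕ, l ≠ [] ∧ (∀ a ∈ l, 0 < a) ∧ l.sum = n ∧ l.prod = m

/-- `ell n` is the largest integer expressible as a product of positive integers summing to `n`. -/
noncomputable def ell (n : ℕ) : ℕ := sSup {m | ProdOfSum n m}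

/-- `I` is a maximal independent set (MIS) of `G`: it is independent, and it is not
properly contained in any other independent set. -/
def IsMaxIndepSet {V : Type*} (G : SimpleGraph V) (I : Set V) : Prop :=
  (∀ x ∈ I, ∀ y ∈ I, ¬ G.Adj x y) ∧
  ∀ J : Set V, (∀ x ∈ J, ∀ y ∈ J, ¬ G.Adj x y) → I ⊆ J → J = I

/-- The number of maximal independent sets of `G`. -/
noncomputable def misCount {V : Type*} (G : SimpleGraph V) : ℕ :=
  Nat.card {I : Set V // IsMaxIndepSet G I}

lemma list_prod_le_two_pow : ∀ l : List ℕ, l.prod ≤ 2 ^ l.sum := by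
  intro l; induction l with
  | nil => simp
  | cons a t ih =>
    simp only [List.prod_cons, List.sum_cons, pow_add]
    exact Nat.mul_le_mul (Nat.lt_two_pow_self (n := a)).le ih

lemma prodOfSum_bddAbove (n : ℕ) : BddAbove {m | ProdOfSum n m} := by
  refine ⟨2 ^ n, fun m hm => ?_⟩
  obtain ⟨l, -, -, hs, hp⟩ := hm
  rw [← hp, ← hs]
  exact list_prod_le_two_pow l

lemma le_ell {n m : ℕ} (h : ProdOfSum n m) : m ≤ ell n :=
  le_csSup (prodOfSum_bddAbove n) h

lemma prodOfSum_self {n : ℕ} (h : 1 ≤ n) : ProdOfSum n n :=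
  ⟨[n], by simp, by simp; omega, by simp, by simp⟩

lemma ell_spec {n : ℕ} (h : 1 ≤ n) : ProdOfSum n (ell n) :=
  Nat.sSup_mem ⟨n, by exact prodOfSum_self h⟩ (prodOfSum_bddAbove n)

lemma self_le_ell (n : ℕ) : n ≤ ell n := by
  rcases Nat.eq_zero_or_pos n with rfl | h
  · simp
  · exact le_ell (prodOfSum_self h)

lemma mul_ell_le {k n : ℕ} (hk : 0 < k) (hn : 1 ≤ n) : k * ell n ≤ ell (k + n) := by
  obtain ⟨l, hne, hpos, hs, hp⟩ := ell_spec hn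
  refine le_ell ⟨k :: l, by simp, ?_, by simp [hs], by simp [hp]⟩
  intro a ha
  rcases List.mem_cons.mp ha with rfl | ha
  · exact hk
  · exact hpos a ha

lemma ell_lt_succ {n : ℕ} (hn : 1 ≤ n) : ell n < ell (n + 1) := by
  obtain ⟨l, hne, hpos, hs, hp⟩ := ell_spec hn
  obtain ⟨a, t, rfl⟩ := List.exists_cons_of_ne_nil hne
  have htp : 0 < t.prod := List.prod_pos (fun x hx => hpos x (List.mem_cons_of_mem _ hx))
  have : ell n < (a + 1) * t.prod := by
    have : ell n = a * t.prod := by rw [← hp]; simp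
    rw [this]; nlinarith
  refine lt_of_lt_of_le this (le_ell ⟨(a + 1) :: t, by simp, ?_, ?_, by simp⟩)
  · intro x hx
    rcases List.mem_cons.mp hx with rfl | hx
    · omega
    · exact hpos x (List.mem_cons_of_mem _ hx)
  · simp at hs ⊢; omega

lemma ell_mono {a b : ℕ} (h1 : 1 ≤ a) (hab : a ≤ b) : ell a ≤ ell b := by
  induction b, hab using Nat.le_induction with
  | base => exact le_refl _
  | succ n hn ih => exact le_trans ih (ell_lt_succ (le_trans h1 hn)).le

/-- Padovan-style bound. -/
def bnd : ℕ → ℕ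
  | 0 => 1
  | 1 => 0
  | 2 => 1
  | (n+3) => bnd (n+1) + bnd n

/-- Finset of lists with entries in {2,3} summing to n. -/
def FL : ℕ → Finset (List ℕ)
  | 0 => {[]}
  | 1 => ∅
  | 2 => {[2]}
  | (n+3) => ((FL (n+1)).image (2 :: ·)) ∪ ((FL n).image (3 :: ·))

lemma card_FL : ∀ n, (FL n).card ≤ bnd n
  | 0 => by simp [FL, bnd]
  | 1 => by simp [FL, bnd]
  | 2 => by simp [FL, bnd]
  | (n+3) => by
    refine le_trans (Finset.card_union_le _ _) ?_
    have h1 := Finset.card_image_le (s := FL (n+1)) (f := (2 :: ·))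
    have h2 := Finset.card_image_le (s := FL n) (f := (3 :: ·))
    have := card_FL (n+1); have := card_FL n
    simp only [bnd]; omega

lemma mem_FL : ∀ (l : List ℕ), (∀ a ∈ l, a = 2 ∨ a = 3) → l ∈ FL l.sum := by
  intro l
  induction l with
  | nil => intro _; simp [FL]
  | cons a t ih =>
    intro h
    have ht : t ∈ FL t.sum := ih (fun x hx => h x (List.mem_cons_of_mem _ hx))
    rcases h a List.mem_cons_self with rfl | rfl
    · rcases Nat.eq_zero_or_pos t.sum with hz | hp
      · have : t = [] := by
          cases t with
          | nil => rfl
          | cons b t' =>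
            exfalso
            have hb := h b (by simp)
            have : (b :: t').sum = b + t'.sum := by simp
            omega
        subst this
        simp [FL]
      · obtain ⟨s, hs⟩ : ∃ s, t.sum = s + 1 := ⟨t.sum - 1, by omega⟩
        have : (2 :: t).sum = s + 3 := by simp; omega
        rw [this, FL]
        apply Finset.mem_union_left
        apply Finset.mem_image_of_mem
        rw [show s + 1 = t.sum from (by omega)]
        exact ht
    · have : (3 :: t).sum = t.sum + 3 := by simp; omega
      rw [this, FL]
      exact Finset.mem_union_right _ (Finset.mem_image_of_mem _ ht)

/-- successive differences of a list -/
def diffs (l : List ℕ) : List ℕ := List.zipWith (fun x y => y - x) l l.tail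

@[simp] lemma diffs_nil : diffs [] = [] := rfl
@[simp] lemma diffs_single (a : ℕ) : diffs [a] = [] := rfl
@[simp] lemma diffs_cons_cons (a b : ℕ) (t : List ℕ) :
    diffs (a :: b :: t) = (b - a) :: diffs (b :: t) := rfl

lemma diffs_sum : ∀ (l : List ℕ), l.Pairwise (· < ·) → l ≠ [] →
    l.headI + (diffs l).sum = l.getLastD 0
  | [] => by simp
  | [a] => by simp
  | (a :: b :: t) => fun hs _ => by
    have hab : a < b := (List.pairwise_cons.mp hs).1 b (by simp)
    have ih := diffs_sum (b :: t) (List.pairwise_cons.mp hs).2 (by simp)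
    simp only [diffs_cons_cons, List.sum_cons, List.headI, List.getLastD_cons] at ih ⊢
    omega

lemma sorted_head_le {l : List ℕ} (hs : l.Pairwise (· < ·)) {z : ℕ} (hz : z ∈ l) :
    l.headI ≤ z := by
  cases l with
  | nil => simp at hz
  | cons a t =>
    rcases List.mem_cons.mp hz with rfl | hz
    · simp
    · exact le_of_lt ((List.pairwise_cons.mp hs).1 z hz)

lemma sorted_le_getLastD : ∀ {l : List ℕ}, l.Pairwise (· < ·) → ∀ z ∈ l,
    z ≤ l.getLastD 0
  | [] => by simp
  | [a] => by intro _ z hz; simp at hz; simp [hz]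
  | (a :: b :: t) => by
    intro hs z hz
    have ih := sorted_le_getLastD (l := b :: t) (List.pairwise_cons.mp hs).2
    simp only [List.getLastD_cons] at ih ⊢
    rcases List.mem_cons.mp hz with rfl | hz
    · have h1 : z < b := (List.pairwise_cons.mp hs).1 b (by simp)
      have hb := ih b (by simp)
      omega
    · exact ih z hz

lemma getLastD_mem : ∀ {l : List ℕ}, l ≠ [] → l.getLastD 0 ∈ l
  | [] => by simp
  | [a] => by simp
  | (a :: b :: t) => fun _ => by
    have := getLastD_mem (l := b :: t) (by simp)
    simpa using Or.inr (by simpa using this)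

lemma diffs_eq_of : ∀ (l l' : List ℕ), l.Pairwise (· < ·) → l'.Pairwise (· < ·) →
    l ≠ [] → l' ≠ [] → l.headI = l'.headI → diffs l = diffs l' → l = l'
  | [], _, _, _, h, _, _, _ => absurd rfl h
  | _, [], _, _, _, h, _, _ => absurd rfl h
  | [a], [a'], _, _, _, _, hh, _ => by simp_all
  | [a], (a' :: b' :: t'), _, _, _, _, _, hd => by simp at hd
  | (a :: b :: t), [a'], _, _, _, _, _, hd => by simp at hd
  | (a :: b :: t), (a' :: b' :: t'), hs, hs', _, _, hh, hd => by
    simp only [List.headI] at hh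
    subst hh
    simp only [diffs_cons_cons, List.cons.injEq] at hd
    have hab : a < b := (List.pairwise_cons.mp hs).1 b (by simp)
    have hab' : a < b' := (List.pairwise_cons.mp hs').1 b' (by simp)
    have hbb : b = b' := by omega
    subst hbb
    have := diffs_eq_of (b :: t) (b :: t') (List.pairwise_cons.mp hs).2
      (List.pairwise_cons.mp hs').2 (by simp) (by simp) rfl hd.2
    simp_all

lemma diffs_pairs : ∀ {l : List ℕ}, l.Pairwise (· < ·) → ∀ d ∈ diffs l,
    ∃ x y, x ∈ l ∧ y ∈ l ∧ x < y ∧ d = y - x ∧ ∀ z ∈ l, z ≤ x ∨ y ≤ z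
  | [] => by simp
  | [a] => by simp
  | (a :: b :: t) => by
    intro hs d hd
    rcases List.mem_cons.mp hd with rfl | hd
    · refine ⟨a, b, by simp, by simp, (List.pairwise_cons.mp hs).1 b (by simp), rfl, ?_⟩
      intro z hz
      rcases List.mem_cons.mp hz with rfl | hz
      · exact Or.inl le_rfl
      · exact Or.inr (sorted_head_le (List.pairwise_cons.mp hs).2 hz)
    · obtain ⟨x, y, hx, hy, hxy, hdxy, hz⟩ :=
        diffs_pairs (List.pairwise_cons.mp hs).2 d hd
      refine ⟨x, y, List.mem_cons_of_mem _ hx, List.mem_cons_of_mem _ hy, hxy, hdxy, ?_⟩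
      intro z hzz
      rcases List.mem_cons.mp hzz with rfl | hzz
      · exact Or.inl (le_of_lt ((List.pairwise_cons.mp hs).1 x hx))
      · exact hz z hzz
open SimpleGraph
open Fin.NatCast Fin.CommRing

lemma adj_iff {n : ℕ} {u v : Fin (n+4)} :
    (cycleGraph (n+4)).Adj u v ↔ u = v + 1 ∨ v = u + 1 := by
  rw [SimpleGraph.cycleGraph_adj']
  have h1 : ((1 : Fin (n+4))).val = 1 := rfl
  constructor
  · rintro (h | h)
    · left
      have h2 : u - v = 1 := Fin.ext (by rw [h1]; exact h)
      rw [sub_eq_iff_eq_add] at h2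
      rw [h2]; exact add_comm 1 v
    · right
      have h2 : v - u = 1 := Fin.ext (by rw [h1]; exact h)
      rw [sub_eq_iff_eq_add] at h2
      rw [h2]; exact add_comm 1 u
  · rintro (h | h)
    · left
      rw [h]
      rw [show v + 1 - v = 1 by ring, h1]
    · right
      rw [h]
      rw [show u + 1 - u = 1 by ring, h1]

lemma mis_dom {n : ℕ} {I : Set (Fin (n+4))}
    (hI : IsMaxIndepSet (cycleGraph (n+4)) I) (v : Fin (n+4)) :
    v ∈ I ∨ ∃ u ∈ I, (cycleGraph (n+4)).Adj u v := by
  by_contra h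
  push_neg at h
  obtain ⟨hv, hu⟩ := h
  have hind : ∀ x ∈ insert v I, ∀ y ∈ insert v I, ¬ (cycleGraph (n+4)).Adj x y := by
    intro x hx y hy hadj
    rcases Set.mem_insert_iff.mp hx with hxv | hx2
    · subst hxv
      rcases Set.mem_insert_iff.mp hy with hyv | hy2
      · subst hyv
        exact SimpleGraph.irrefl _ hadj
      · exact hu y hy2 hadj.symm
    · rcases Set.mem_insert_iff.mp hy with hyv | hy2
      · subst hyv
        exact hu x hx2 hadj
      · exact hI.1 x hx2 y hy2 hadj
  have := hI.2 _ hind (Set.subset_insert _ _)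
  exact hv (this ▸ Set.mem_insert v I)

noncomputable def natset {j : ℕ} (I : Set (Fin j)) : Finset ℕ :=
  (Set.Finite.toFinset (Set.toFinite I)).image Fin.val

lemma mem_natset {j : ℕ} {I : Set (Fin j)} {y : ℕ} :
    y ∈ natset I ↔ ∃ x ∈ I, (x : Fin j).val = y := by
  simp [natset, Set.Finite.mem_toFinset]

lemma natset_lt {j : ℕ} {I : Set (Fin j)} {y : ℕ} (h : y ∈ natset I) : y < j := by
  obtain ⟨x, _, rfl⟩ := mem_natset.mp h; exact x.isLt

lemma val_mem_natset {j : ℕ} {I : Set (Fin j)} {x : Fin j} (h : x ∈ I) :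
    x.val ∈ natset I := mem_natset.mpr ⟨x, h, rfl⟩

lemma cast_mem_of_mem_natset {j : ℕ} [NeZero j] {I : Set (Fin j)} {y : ℕ}
    (h : y ∈ natset I) : ((y : Fin j) ∈ I) := by
  obtain ⟨x, hx, rfl⟩ := mem_natset.mp h
  rwa [Fin.cast_val_eq_self]

lemma mem_iff_val_mem {j : ℕ} {I : Set (Fin j)} {x : Fin j} :
    x ∈ I ↔ x.val ∈ natset I := by
  constructor
  · exact val_mem_natset
  · intro h
    obtain ⟨x', hx', hv⟩ := mem_natset.mp h
    rwa [← Fin.val_injective hv]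

lemma dom_nat {n : ℕ} {I : Set (Fin (n+4))}
    (hI : IsMaxIndepSet (cycleGraph (n+4)) I) (p : ℕ) :
    ∃ t, 1 ≤ t ∧ t ≤ 3 ∧ (p + t) % (n + 4) ∈ natset I := by
  rcases mis_dom hI ((p + 2 : ℕ) : Fin (n+4)) with hv | ⟨u, hu, hadj⟩
  · refine ⟨2, by omega, by omega, ?_⟩
    have := val_mem_natset hv
    rwa [Fin.val_natCast] at this
  · rcases adj_iff.mp hadj with h | h
    · refine ⟨3, by omega, by omega, ?_⟩
      have hu3 : u = ((p + 3 : ℕ) : Fin (n+4)) := by rw [h]; push_cast; ring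
      have := val_mem_natset hu
      rwa [hu3, Fin.val_natCast] at this
    · refine ⟨1, by omega, by omega, ?_⟩
      have hu1 : u = ((p + 1 : ℕ) : Fin (n+4)) := by
        have h2 : ((p + 2 : ℕ) : Fin (n+4)) = ((p + 1 : ℕ) : Fin (n+4)) + 1 := by
          push_cast; ring
        rw [h2] at h
        exact add_right_cancel h.symm
      have := val_mem_natset hu
      rwa [hu1, Fin.val_natCast] at this

lemma no_consec {n : ℕ} {I : Set (Fin (n+4))}
    (hI : IsMaxIndepSet (cycleGraph (n+4)) I) {x : ℕ}
    (h1 : x ∈ natset I) (h2 : (x+1) ∈ natset I) : False := by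
  have m1 : ((x : Fin (n+4)) ∈ I) := cast_mem_of_mem_natset h1
  have m2 : (((x+1 : ℕ) : Fin (n+4)) ∈ I) := cast_mem_of_mem_natset h2
  refine hI.1 _ m1 _ m2 (adj_iff.mpr (Or.inr ?_))
  push_cast; ring

lemma no_wrap_adj {n : ℕ} {I : Set (Fin (n+4))}
    (hI : IsMaxIndepSet (cycleGraph (n+4)) I)
    (h1 : (0:ℕ) ∈ natset I) (h2 : (n+3) ∈ natset I) : False := by
  have m1 : (((0:ℕ) : Fin (n+4)) ∈ I) := cast_mem_of_mem_natset h1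
  have m2 : (((n+3 : ℕ) : Fin (n+4)) ∈ I) := cast_mem_of_mem_natset h2
  refine hI.1 _ m1 _ m2 (adj_iff.mpr (Or.inl ?_))
  have : (((n+3:ℕ) : Fin (n+4))) + 1 = ((n + 4 : ℕ) : Fin (n+4)) := by push_cast; ring
  rw [this, Fin.natCast_self]
  norm_num
lemma headI_mem {l : List ℕ} (h : l ≠ []) : l.headI ∈ l := by
  cases l with
  | nil => exact absurd rfl h
  | cons a t => simp

def TF (j : ℕ) : Finset (ℕ × List ℕ) :=
  ((Finset.range 2) ×ˢ ((FL (j-2)).image (2 :: ·))) ∪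
  ((Finset.range 3) ×ˢ ((FL (j-3)).image (3 :: ·)))

lemma card_TF (j : ℕ) : (TF j).card ≤ 2 * bnd (j-2) + 3 * bnd (j-3) := by
  refine le_trans (Finset.card_union_le _ _) ?_
  rw [Finset.card_product, Finset.card_product, Finset.card_range, Finset.card_range]
  have h1 := le_trans (Finset.card_image_le (s := FL (j-2)) (f := (2 :: ·))) (card_FL (j-2))
  have h2 := le_trans (Finset.card_image_le (s := FL (j-3)) (f := (3 :: ·))) (card_FL (j-3))
  omega

noncomputable def enc {j : ℕ} (I : Set (Fin j)) : ℕ × List ℕ :=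
  (((natset I).sort (· ≤ ·)).headI,
    (j - ((natset I).sort (· ≤ ·)).getLastD 0 + ((natset I).sort (· ≤ ·)).headI)
      :: diffs ((natset I).sort (· ≤ ·)))

lemma enc_facts {n : ℕ} {I : Set (Fin (n+4))}
    (hI : IsMaxIndepSet (cycleGraph (n+4)) I) :
    ((natset I).sort (· ≤ ·)) ≠ [] ∧
    (∀ d ∈ diffs ((natset I).sort (· ≤ ·)), d = 2 ∨ d = 3) ∧
    ((natset I).sort (· ≤ ·)).headI + (diffs ((natset I).sort (· ≤ ·))).sum
      = ((natset I).sort (· ≤ ·)).getLastD 0 ∧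
    ((natset I).sort (· ≤ ·)).headI ≤ ((natset I).sort (· ≤ ·)).getLastD 0 ∧
    ((natset I).sort (· ≤ ·)).getLastD 0 < n + 4 ∧
    2 ≤ (n+4) - ((natset I).sort (· ≤ ·)).getLastD 0 + ((natset I).sort (· ≤ ·)).headI ∧
    (n+4) - ((natset I).sort (· ≤ ·)).getLastD 0 + ((natset I).sort (· ≤ ·)).headI ≤ 3 := by
  set s := (natset I).sort (· ≤ ·) with hsdef
  have hsort : s.Pairwise (· < ·) := (Finset.sortedLT_sort _).pairwise
  have hmem : ∀ z : ℕ, z ∈ s ↔ z ∈ natset I := fun z => Finset.mem_sort _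
  have hne : s ≠ [] := by
    obtain ⟨t, -, -, hmem'⟩ := dom_nat hI 0
    exact List.ne_nil_of_mem ((hmem _).mpr hmem')
  set m := s.headI with hm
  set M := s.getLastD 0 with hM
  have hmmem : m ∈ natset I := (hmem m).mp (headI_mem hne)
  have hMmem : M ∈ natset I := (hmem M).mp (getLastD_mem hne)
  have hmin : ∀ z ∈ natset I, m ≤ z := fun z hz => sorted_head_le hsort ((hmem z).mpr hz)
  have hmax : ∀ z ∈ natset I, z ≤ M := fun z hz => sorted_le_getLastD hsort z ((hmem z).mpr hz)
  have hMlt : M < n + 4 := natset_lt hMmem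
  have hsum := diffs_sum s hsort hne
  have hd23 : ∀ d ∈ diffs s, d = 2 ∨ d = 3 := by
    intro d hd
    obtain ⟨x, y, hx, hy, hxy, rfl, hsep⟩ := diffs_pairs hsort d hd
    have hxN : x ∈ natset I := (hmem x).mp hx
    have hyN : y ∈ natset I := (hmem y).mp hy
    have hylt : y < n + 4 := natset_lt hyN
    have hne1 : y - x ≠ 1 := by
      intro h1
      have hxy1 : y = x + 1 := by omega
      exact no_consec hI hxN (hxy1 ▸ hyN)
    have hle3 : y - x ≤ 3 := by
      by_contra hgt
      obtain ⟨t, ht1, ht3, htm⟩ := dom_nat hI x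
      have hlt : x + t < n + 4 := by omega
      rw [Nat.mod_eq_of_lt hlt] at htm
      rcases hsep _ ((hmem _).mpr htm) with h | h <;> omega
    omega
  have hwrap3 : (n+4) - M + m ≤ 3 := by
    by_contra hgt
    obtain ⟨t, ht1, ht3, htm⟩ := dom_nat hI M
    rcases Nat.lt_or_ge (M + t) (n+4) with hlt | hge
    · rw [Nat.mod_eq_of_lt hlt] at htm
      have := hmax _ htm; omega
    · rw [Nat.mod_eq_sub_mod hge, Nat.mod_eq_of_lt (by omega)] at htm
      have := hmin _ htm; omega
  have hwrap2 : 2 ≤ (n+4) - M + m := by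
    by_contra hlt
    have hMn : M = n + 3 ∧ m = 0 := by omega
    exact no_wrap_adj hI (hMn.2 ▸ hmmem) (hMn.1 ▸ hMmem)
  exact ⟨hne, hd23, hsum, hmax m hmmem, hMlt, hwrap2, hwrap3⟩

lemma enc_mem_TF {n : ℕ} {I : Set (Fin (n+4))}
    (hI : IsMaxIndepSet (cycleGraph (n+4)) I) : enc I ∈ TF (n+4) := by
  obtain ⟨hne, hd23, hsum, hmM, hMlt, hw2, hw3⟩ := enc_facts hI
  set s := (natset I).sort (· ≤ ·) with hsdef
  set m := s.headI with hm
  set M := s.getLastD 0 with hM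
  have hD : diffs s ∈ FL ((diffs s).sum) := mem_FL _ hd23
  have hwrap : (n+4) - M + m = 2 ∨ (n+4) - M + m = 3 := by omega
  show ((m, ((n+4) - M + m) :: diffs s)) ∈ TF (n+4)
  rcases hwrap with hw | hw
  · apply Finset.mem_union_left
    rw [Finset.mem_product]
    constructor
    · simp only [Finset.mem_range]; omega
    · rw [hw]
      apply Finset.mem_image_of_mem
      have hds : (diffs s).sum = n + 4 - 2 := by omega
      rwa [hds] at hD
  · apply Finset.mem_union_right
    rw [Finset.mem_product]
    constructor
    · simp only [Finset.mem_range]; omega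
    · rw [hw]
      apply Finset.mem_image_of_mem
      have hds : (diffs s).sum = n + 4 - 3 := by omega
      rwa [hds] at hD

lemma enc_inj {n : ℕ} {I I' : Set (Fin (n+4))}
    (hI : IsMaxIndepSet (cycleGraph (n+4)) I)
    (hI' : IsMaxIndepSet (cycleGraph (n+4)) I')
    (h : enc I = enc I') : I = I' := by
  obtain ⟨hne, -, -, -, -, -, -⟩ := enc_facts hI
  obtain ⟨hne', -, -, -, -, -, -⟩ := enc_facts hI'
  unfold enc at h
  rw [Prod.ext_iff] at h
  obtain ⟨h1, h2⟩ := h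
  simp only [List.cons.injEq] at h2
  have hs := diffs_eq_of _ _ ((Finset.sortedLT_sort _).pairwise) ((Finset.sortedLT_sort _).pairwise)
    hne hne' h1 h2.2
  have hN : natset I = natset I' := by
    ext z
    rw [← Finset.mem_sort (r := (· ≤ ·)), ← Finset.mem_sort (r := (· ≤ ·)), hs]
  ext x
  rw [mem_iff_val_mem, mem_iff_val_mem, hN]

lemma misCount_le_bnd (n : ℕ) :
    misCount (cycleGraph (n+4)) ≤ 2 * bnd (n+2) + 3 * bnd (n+1) := by
  have hcard : misCount (cycleGraph (n+4)) ≤ (TF (n+4)).card := by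
    have hf : Function.Injective
        (fun x : {I : Set (Fin (n+4)) // IsMaxIndepSet (cycleGraph (n+4)) I} =>
          (⟨enc x.1, enc_mem_TF x.2⟩ : {p // p ∈ TF (n+4)})) := by
      intro a b hab
      apply Subtype.ext
      exact enc_inj a.2 b.2 (congrArg Subtype.val hab)
    calc misCount (cycleGraph (n+4))
        ≤ Nat.card {p // p ∈ TF (n+4)} := Nat.card_le_card_of_injective _ hf
      _ = (TF (n+4)).card := by rw [Nat.card_eq_fintype_card, Fintype.card_coe]
  refine le_trans hcard (le_trans (card_TF (n+4)) ?_)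
  have e1 : n + 4 - 2 = n + 2 := by omega
  have e2 : n + 4 - 3 = n + 1 := by omega
  rw [e1, e2]

lemma ell_five : 6 ≤ ell 5 := le_ell ⟨[2,3], by simp, by norm_num, by norm_num, by norm_num⟩

lemma key_ineq : ∀ k : ℕ, 2 * bnd (k+4) + 3 * bnd (k+3) ≤ 2 * ell (k+3) + ell (k+2) := by
  intro k
  induction k using Nat.strong_induction_on with
  | _ k IH =>
    match k with
    | 0 =>
      have h3 : 3 ≤ ell 3 := self_le_ell 3
      have h2 : 2 ≤ ell 2 := self_le_ell 2
      have hb : 2 * bnd 4 + 3 * bnd 3 = 5 := by norm_num [bnd]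
      show 2 * bnd 4 + 3 * bnd 3 ≤ 2 * ell 3 + ell 2
      omega
    | 1 =>
      have h4 : 4 ≤ ell 4 := self_le_ell 4
      have h3 : 3 ≤ ell 3 := self_le_ell 3
      have hb : 2 * bnd 5 + 3 * bnd 4 = 7 := by norm_num [bnd]
      show 2 * bnd 5 + 3 * bnd 4 ≤ 2 * ell 4 + ell 3
      omega
    | 2 =>
      have h5 : 6 ≤ ell 5 := ell_five
      have h4 : 4 ≤ ell 4 := self_le_ell 4
      have hb : 2 * bnd 6 + 3 * bnd 5 = 10 := by norm_num [bnd]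
      show 2 * bnd 6 + 3 * bnd 5 ≤ 2 * ell 5 + ell 4
      omega
    | (m+3) =>
      have ih1 : 2 * bnd (m+5) + 3 * bnd (m+4) ≤ 2 * ell (m+4) + ell (m+3) :=
        IH (m+1) (by omega)
      have ih0 : 2 * bnd (m+4) + 3 * bnd (m+3) ≤ 2 * ell (m+3) + ell (m+2) :=
        IH m (by omega)
      have e1 : bnd (m+7) = bnd (m+5) + bnd (m+4) := rfl
      have e2 : bnd (m+6) = bnd (m+4) + bnd (m+3) := rfl
      have g1 : 2 * ell (m+4) ≤ ell (m+6) := by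
        have h := mul_ell_le (k := 2) (n := m+4) (by norm_num) (by omega)
        rwa [show 2 + (m+4) = m+6 by omega] at h
      have g2 : 2 * ell (m+3) ≤ ell (m+5) := by
        have h := mul_ell_le (k := 2) (n := m+3) (by norm_num) (by omega)
        rwa [show 2 + (m+3) = m+5 by omega] at h
      have g3 : ell (m+3) ≤ ell (m+4) := ell_mono (by omega) (by omega)
      have g4 : ell (m+2) ≤ ell (m+4) := ell_mono (by omega) (by omega)
      show 2 * bnd (m+7) + 3 * bnd (m+6) ≤ 2 * ell (m+6) + ell (m+5)
      omega

/-- For `j ≥ 4`, the cycle on `j` vertices satisfies `m(C_j) < ell j`; moreover for `j ≥ 6`,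
`m(C_j) ≤ 2·ell (j−3) + ell (j−4) < ell j`. -/
theorem misCount_cycleGraph_lt :
    ∀ j : ℕ, 4 ≤ j →
      misCount (SimpleGraph.cycleGraph j) < ell j ∧
      (6 ≤ j →
        misCount (SimpleGraph.cycleGraph j) ≤ 2 * ell (j - 3) + ell (j - 4) ∧
        2 * ell (j - 3) + ell (j - 4) < ell j) := by
  intro j hj
  obtain ⟨n, rfl⟩ : ∃ n, j = n + 4 := ⟨j - 4, by omega⟩
  have hb := misCount_le_bnd n
  rcases Nat.lt_or_ge n 2 with hn | hn
  · interval_cases n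
    · constructor
      · have h4 : 4 ≤ ell 4 := self_le_ell 4
        have hbv : 2 * bnd 2 + 3 * bnd 1 = 2 := by norm_num [bnd]
        have hb' : misCount (SimpleGraph.cycleGraph 4) ≤ 2 * bnd 2 + 3 * bnd 1 := hb
        show misCount (SimpleGraph.cycleGraph 4) < ell 4
        omega
      · intro h6; omega
    · constructor
      · have h5 : 6 ≤ ell 5 := ell_five
        have hbv : 2 * bnd 3 + 3 * bnd 2 = 5 := by norm_num [bnd]
        have hb' : misCount (SimpleGraph.cycleGraph 5) ≤ 2 * bnd 3 + 3 * bnd 2 := hb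
        show misCount (SimpleGraph.cycleGraph 5) < ell 5
        omega
      · intro h6; omega
  · obtain ⟨k, rfl⟩ : ∃ k, n = k + 2 := ⟨n - 2, by omega⟩
    have hkey := key_ineq k
    have hb' : misCount (SimpleGraph.cycleGraph (k+6)) ≤ 2 * bnd (k+4) + 3 * bnd (k+3) := hb
    have hle : misCount (SimpleGraph.cycleGraph (k+6)) ≤ 2 * ell (k+3) + ell (k+2) :=
      le_trans hb' hkey
    have hstrict : 2 * ell (k+3) + ell (k+2) < ell (k+6) := by
      have h1 : ell (k+2) < ell (k+3) := ell_lt_succ (by omega)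
      have h2 : 3 * ell (k+3) ≤ ell (k+6) := by
        have h := mul_ell_le (k := 3) (n := k+3) (by norm_num) (by omega)
        rwa [show 3 + (k+3) = k+6 by omega] at h
      omega
    refine ⟨?_, fun _ => ⟨?_, ?_⟩⟩
    · show misCount (SimpleGraph.cycleGraph (k+6)) < ell (k+6)
      omega
    · show misCount (SimpleGraph.cycleGraph (k+6)) ≤ 2 * ell (k+3) + ell (k+2)
      exact hle
    · show 2 * ell (k+3) + ell (k+2) < ell (k+6)
      exact hstrict
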